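/- Let n ≥ 1, 1 ≤ k ≤ n, and z_1, …, z_n ≥ 1, and set λ = tr(Ẑ)/(2n). Define f : U(n) → ℝ by f(U) = tr[ ( (J M_{n,k}(U))² + λ² Π̂ )² ]. Then for all U, V ∈ U(n), | f(U) − f(V) | ≤ 32 √(2k) ‖Ẑ‖_∞⁴ ‖U − V‖₂, where ‖·‖₂ is the Frobenius norm and ‖Ẑ‖_∞ is the operator (spectral) norm. In particular, f is Lipschitz with constant 32 √(2k) ‖Ẑ‖_∞⁴ with respect to the Frobenius distance on U(n). -/

import Mathlib

open MeasureTheory Matrix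

noncomputable instance (n : ℕ) : MeasurableSpace (Matrix.unitaryGroup (Fin n) ℂ) := borel _
instance (n : ℕ) : BorelSpace (Matrix.unitaryGroup (Fin n) ℂ) := ⟨rfl⟩

/-- `η(U) = [[Re U, Im U], [−Im U, Re U]]` in block form. -/
noncomputable def eta {n : ℕ} (U : Matrix.unitaryGroup (Fin n) ℂ) :
    Matrix (Fin n ⊕ Fin n) (Fin n ⊕ Fin n) ℝ :=
  Matrix.fromBlocks
    (Matrix.of fun i j => ((U : Matrix (Fin n) (Fin n) ℂ) i j).re)
    (Matrix.of fun i j => ((U : Matrix (Fin n) (Fin n) ℂ) i j).im)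
    (Matrix.of fun i j => -((U : Matrix (Fin n) (Fin n) ℂ) i j).im)
    (Matrix.of fun i j => ((U : Matrix (Fin n) (Fin n) ℂ) i j).re)

/-- The `2n×2n` symplectic form matrix `J = [[0, −I], [I, 0]]`. -/
def Jmat (n : ℕ) : Matrix (Fin n ⊕ Fin n) (Fin n ⊕ Fin n) ℝ :=
  Matrix.fromBlocks 0 (-1) 1 0

/-- `Ẑ = Z ⊕ Z⁻¹` for `Z = diag (z 1, …, z n)`. -/
noncomputable def Zhat {n : ℕ} (z : Fin n → ℝ) :
    Matrix (Fin n ⊕ Fin n) (Fin n ⊕ Fin n) ℝ :=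
  Matrix.fromBlocks (Matrix.diagonal z) 0 0 (Matrix.diagonal fun j => (z j)⁻¹)

/-- `Π̂ = Π ⊕ Π` where `Π` is the diagonal projection with `k` ones. -/
def Pihat (n k : ℕ) : Matrix (Fin n ⊕ Fin n) (Fin n ⊕ Fin n) ℝ :=
  Matrix.fromBlocks
    (Matrix.diagonal fun j : Fin n => if (j : ℕ) < k then (1 : ℝ) else 0) 0 0
    (Matrix.diagonal fun j : Fin n => if (j : ℕ) < k then (1 : ℝ) else 0)

/-- `M_{n,k}(U) = Π̂ η(U) Ẑ η(U)ᵀ Π̂`, the covariance matrix of the reduced state. -/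
noncomputable def Mnk {n : ℕ} (k : ℕ) (z : Fin n → ℝ)
    (U : Matrix.unitaryGroup (Fin n) ℂ) :
    Matrix (Fin n ⊕ Fin n) (Fin n ⊕ Fin n) ℝ :=
  Pihat n k * eta U * Zhat z * (eta U)ᵀ * Pihat n k

/-- `A = (Z − Z⁻¹)/2`. -/
noncomputable def Amat {n : ℕ} (z : Fin n → ℝ) : Matrix (Fin n) (Fin n) ℝ :=
  Matrix.diagonal fun j => (z j - (z j)⁻¹) / 2

/-- `B = (Z + Z⁻¹)/2`. -/
noncomputable def Bmat {n : ℕ} (z : Fin n → ℝ) : Matrix (Fin n) (Fin n) ℝ :=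
  Matrix.diagonal fun j => (z j + (z j)⁻¹) / 2

/-- The average energy `λ(n) = (1/(2n)) Σ_j (z_j + 1/z_j)`. -/
noncomputable def avgE {n : ℕ} (z : Fin n → ℝ) : ℝ :=
  (∑ j, (z j + (z j)⁻¹)) / (2 * n)
/-- Frobenius (Hilbert–Schmidt) norm `‖X‖₂ = √(Σ |X i j|²) = √(tr(X*X))`. -/
noncomputable def frob {m m' : Type*} [Fintype m] [Fintype m'] {𝕜 : Type*} [RCLike 𝕜]
    (X : Matrix m m' 𝕜) : ℝ := Real.sqrt (∑ i, ∑ j, ‖X i j‖ ^ 2)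

/-- Operator (spectral) norm of a real square matrix. -/
noncomputable def opNorm {m : Type*} [Fintype m] [DecidableEq m] (X : Matrix m m ℝ) : ℝ :=
  ‖LinearMap.toContinuousLinearMap (Matrix.toEuclideanLin X)‖

section frobHelpers
open Matrix
variable {m m' : Type*} [Fintype m] [Fintype m']

noncomputable def mvec (X : Matrix m m' ℝ) : EuclideanSpace ℝ (m × m') :=
  (WithLp.equiv 2 _).symm (fun p => X p.1 p.2)

lemma frob_eq_norm (X : Matrix m m' ℝ) : frob X = ‖mvec X‖ := by
  rw [EuclideanSpace.norm_eq, frob]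
  congr 1
  rw [Fintype.sum_prod_type (f := fun p : m × m' => ‖mvec X p‖ ^ 2)]
  rfl

lemma frob_nonneg {𝕜 : Type*} [RCLike 𝕜] (X : Matrix m m' 𝕜) : 0 ≤ frob X := Real.sqrt_nonneg _

lemma frob_sq (X : Matrix m m' ℝ) : frob X ^ 2 = ∑ i, ∑ j, (X i j) ^ 2 := by
  rw [frob, Real.sq_sqrt]
  · simp [Real.norm_eq_abs, sq_abs]
  · positivity

lemma frob_transpose (X : Matrix m m' ℝ) : frob Xᵀ = frob X := by
  rw [frob, frob, Finset.sum_comm]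
  rfl

lemma frob_add_le (X Y : Matrix m m' ℝ) : frob (X + Y) ≤ frob X + frob Y := by
  rw [frob_eq_norm, frob_eq_norm, frob_eq_norm]
  have : mvec (X + Y) = mvec X + mvec Y := rfl
  rw [this]
  exact norm_add_le _ _

lemma frob_smul (c : ℝ) (X : Matrix m m' ℝ) : frob (c • X) = |c| * frob X := by
  rw [frob_eq_norm, frob_eq_norm]
  have : mvec (c • X) = c • mvec X := rfl
  rw [this, norm_smul, Real.norm_eq_abs]

lemma sum_sq_eq_trace (X : Matrix m m' ℝ) :
    (∑ i, ∑ j, (X i j) ^ 2) = Matrix.trace (Xᵀ * X) := by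
  rw [Matrix.trace, Finset.sum_comm]
  simp [Matrix.diag, Matrix.mul_apply, sq]

lemma frob_eq_of_trace_eq {X Y : Matrix m m' ℝ}
    (h : Matrix.trace (Xᵀ * X) = Matrix.trace (Yᵀ * Y)) : frob X = frob Y := by
  have h1 := sum_sq_eq_trace X
  have h2 := sum_sq_eq_trace Y
  rw [frob, frob]
  congr 1
  simp only [Real.norm_eq_abs, sq_abs]
  rw [h1, h2, h]

variable [DecidableEq m] in
lemma frob_orth_mul {O : Matrix m m ℝ} (h : Oᵀ * O = 1) (X : Matrix m m' ℝ) :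
    frob (O * X) = frob X := by
  apply frob_eq_of_trace_eq
  rw [Matrix.transpose_mul, Matrix.mul_assoc, ← Matrix.mul_assoc Oᵀ O X, h, Matrix.one_mul]

variable [DecidableEq m] in
lemma frob_mul_orth {O : Matrix m m ℝ} (h : Oᵀ * O = 1) (X : Matrix m' m ℝ) :
    frob (X * O) = frob X := by
  apply frob_eq_of_trace_eq
  rw [Matrix.transpose_mul]
  rw [show Oᵀ * Xᵀ * (X * O) = Oᵀ * (Xᵀ * X) * O by simp [Matrix.mul_assoc]]
  rw [Matrix.trace_mul_cycle, ← Matrix.mul_assoc, mul_eq_one_comm.mp h, Matrix.one_mul]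

variable [DecidableEq m] in
lemma frob_diag_mul_le {d : m → ℝ} {c : ℝ} (hc : 0 ≤ c) (h : ∀ i, |d i| ≤ c)
    (X : Matrix m m' ℝ) : frob (Matrix.diagonal d * X) ≤ c * frob X := by
  rw [frob, frob, ← Real.sqrt_sq hc, ← Real.sqrt_mul (by positivity)]
  apply Real.sqrt_le_sqrt
  rw [Finset.mul_sum]
  refine Finset.sum_le_sum fun i _ => ?_
  rw [Finset.mul_sum]
  refine Finset.sum_le_sum fun j _ => ?_
  rw [Matrix.diagonal_mul]
  simp only [Real.norm_eq_abs, sq_abs, mul_pow]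
  have : (d i) ^ 2 ≤ c ^ 2 := by
    rw [← sq_abs]; exact pow_le_pow_left₀ (abs_nonneg _) (h i) 2
  nlinarith [sq_nonneg (X i j)]

variable [DecidableEq m] in
lemma frob_mul_diag_le {d : m → ℝ} {c : ℝ} (hc : 0 ≤ c) (h : ∀ i, |d i| ≤ c)
    (X : Matrix m' m ℝ) : frob (X * Matrix.diagonal d) ≤ c * frob X := by
  rw [frob, frob, ← Real.sqrt_sq hc, ← Real.sqrt_mul (by positivity)]
  apply Real.sqrt_le_sqrt
  rw [Finset.mul_sum]
  refine Finset.sum_le_sum fun i _ => ?_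
  rw [Finset.mul_sum]
  refine Finset.sum_le_sum fun j _ => ?_
  rw [Matrix.mul_diagonal]
  simp only [Real.norm_eq_abs, sq_abs, mul_pow]
  have : (d j) ^ 2 ≤ c ^ 2 := by
    rw [← sq_abs]; exact pow_le_pow_left₀ (abs_nonneg _) (h j) 2
  nlinarith [sq_nonneg (X i j)]

lemma abs_trace_mul_le (A : Matrix m m' ℝ) (B : Matrix m' m ℝ) :
    |Matrix.trace (A * B)| ≤ frob A * frob B := by
  have key : Matrix.trace (A * B) = inner ℝ (mvec A) (mvec Bᵀ) := by
    rw [Matrix.trace]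
    simp only [Matrix.diag, Matrix.mul_apply]
    rw [PiLp.inner_apply (𝕜 := ℝ) (mvec A) (mvec Bᵀ),
      Fintype.sum_prod_type (f := fun p : m × m' =>
        inner (𝕜 := ℝ) (mvec A p) (mvec Bᵀ p))]
    simp only [RCLike.inner_apply, conj_trivial]
    exact Finset.sum_congr rfl fun i _ => Finset.sum_congr rfl fun j _ => by rw [mul_comm]; rfl
  rw [key, ← frob_transpose B, frob_eq_norm, frob_eq_norm]
  exact abs_real_inner_le_norm _ _

variable [DecidableEq m] in
lemma abs_diag_le_opNorm (d : m → ℝ) (i : m) : |d i| ≤ opNorm (Matrix.diagonal d) := by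
  have h := (LinearMap.toContinuousLinearMap
    (Matrix.toEuclideanLin (Matrix.diagonal d))).le_opNorm (EuclideanSpace.single i 1)
  have happ : LinearMap.toContinuousLinearMap (Matrix.toEuclideanLin (Matrix.diagonal d))
      (EuclideanSpace.single i (1:ℝ)) = EuclideanSpace.single i (d i) := by
    rw [LinearMap.coe_toContinuousLinearMap']
    rw [← EuclideanSpace.toLp_single, Matrix.toEuclideanLin_apply_piLp_toLp,
      ← EuclideanSpace.toLp_single (𝕜 := ℝ)]
    congr 1
    rw [Matrix.mulVec_single]
    funext r
    by_cases hr : r = i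
    · subst hr; simp [Matrix.diagonal]
    · simp [Matrix.diagonal_apply_ne _ hr, Pi.single_eq_of_ne hr]
  rw [happ, EuclideanSpace.norm_single, EuclideanSpace.norm_single] at h
  simp only [Real.norm_eq_abs, norm_one, mul_one] at h
  exact h

end frobHelpers

section etaHelpers
open Matrix

lemma eta_orth {n : ℕ} (U : Matrix.unitaryGroup (Fin n) ℂ) : (eta U)ᵀ * eta U = 1 := by
  have h1 : (star (U : Matrix (Fin n) (Fin n) ℂ)) * U = 1 := U.2.1
  have hre : ∀ i j, (∑ p, (((U:Matrix (Fin n) (Fin n) ℂ) p i).re * ((U:Matrix (Fin n) (Fin n) ℂ) p j).re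
      + ((U:Matrix (Fin n) (Fin n) ℂ) p i).im * ((U:Matrix (Fin n) (Fin n) ℂ) p j).im))
      = if i = j then 1 else 0 := by
    intro i j
    have h := congrArg (fun M => (M i j).re) h1
    simp only [Matrix.mul_apply, Matrix.star_apply, Complex.re_sum, Matrix.one_apply,
      Complex.mul_re, Complex.star_def, Complex.conj_re, Complex.conj_im,
      apply_ite Complex.re, Complex.one_re, Complex.zero_re] at h
    rw [← h]
    exact Finset.sum_congr rfl fun p _ => by ring
  have him : ∀ i j, (∑ p, (((U:Matrix (Fin n) (Fin n) ℂ) p i).re * ((U:Matrix (Fin n) (Fin n) ℂ) p j).im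
      - ((U:Matrix (Fin n) (Fin n) ℂ) p i).im * ((U:Matrix (Fin n) (Fin n) ℂ) p j).re)) = 0 := by
    intro i j
    have h := congrArg (fun M => (M i j).im) h1
    simp only [Matrix.mul_apply, Matrix.star_apply, Complex.im_sum, Matrix.one_apply,
      Complex.mul_im, Complex.star_def, Complex.conj_re, Complex.conj_im,
      apply_ite Complex.im, Complex.one_im, Complex.zero_im, ite_self] at h
    rw [← h]
    exact Finset.sum_congr rfl fun p _ => by ring
  ext i j
  rcases i with i | i <;> rcases j with j | j <;>
    simp only [Matrix.mul_apply, Matrix.transpose_apply, Fintype.sum_sum_type, eta,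
      Matrix.fromBlocks_apply₁₁, Matrix.fromBlocks_apply₁₂, Matrix.fromBlocks_apply₂₁,
      Matrix.fromBlocks_apply₂₂, Matrix.of_apply, Matrix.one_apply, Sum.inl.injEq,
      Sum.inr.injEq, reduceCtorEq] <;>
    rw [← Finset.sum_add_distrib]
  · rw [← hre i j]
    exact Finset.sum_congr rfl fun p _ => by ring
  · rw [if_neg (by simp)]
    rw [← him i j]
    exact Finset.sum_congr rfl fun p _ => by ring
  · rw [if_neg (by simp)]
    rw [← him j i]
    exact Finset.sum_congr rfl fun p _ => by ring
  · rw [← hre i j]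
    exact Finset.sum_congr rfl fun p _ => by ring

lemma etaT_orth {n : ℕ} (U : Matrix.unitaryGroup (Fin n) ℂ) :
    ((eta U)ᵀ)ᵀ * (eta U)ᵀ = 1 := by
  rw [Matrix.transpose_transpose]
  exact mul_eq_one_comm.mp (eta_orth U)

lemma Jmat_orth (n : ℕ) : (Jmat n)ᵀ * Jmat n = 1 := by
  rw [Jmat, Matrix.fromBlocks_transpose, Matrix.fromBlocks_multiply, ← Matrix.fromBlocks_one]
  congr 1 <;> simp

end etaHelpers

section mainProof
open Matrix

variable {n k : ℕ} {z : Fin n → ℝ}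

/-- the diagonal entries of `Π̂` as a function on `Fin n ⊕ Fin n` -/
def dP (n k : ℕ) : Fin n ⊕ Fin n → ℝ :=
  Sum.elim (fun j : Fin n => if (j : ℕ) < k then (1 : ℝ) else 0)
    (fun j : Fin n => if (j : ℕ) < k then (1 : ℝ) else 0)

noncomputable def dZ {n : ℕ} (z : Fin n → ℝ) : Fin n ⊕ Fin n → ℝ :=
  Sum.elim z (fun j => (z j)⁻¹)

lemma Pihat_eq (n k : ℕ) : Pihat n k = Matrix.diagonal (dP n k) := by
  rw [Pihat, Matrix.fromBlocks_diagonal]; rfl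

lemma Zhat_eq (z : Fin n → ℝ) : Zhat z = Matrix.diagonal (dZ z) := by
  rw [Zhat, Matrix.fromBlocks_diagonal]; rfl

lemma dP_abs_le (hjk : True) : ∀ p, |dP n k p| ≤ 1 := by
  rintro (j | j) <;> simp only [dP, Sum.elim_inl, Sum.elim_inr] <;>
    split <;> simp

lemma dZ_abs_le (hz : ∀ j, 1 ≤ z j) : ∀ p, |dZ z p| ≤ opNorm (Zhat z) := by
  have key : ∀ p, |dZ z p| ≤ opNorm (Matrix.diagonal (dZ z)) := abs_diag_le_opNorm (dZ z)
  rw [← Zhat_eq] at key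
  exact key

lemma opZ_pos (hz : ∀ j, 1 ≤ z j) (hn : 1 ≤ n) : 1 ≤ opNorm (Zhat z) := by
  have j0 : Fin n := ⟨0, hn⟩
  have h := dZ_abs_le hz (Sum.inl j0)
  have : 1 ≤ |dZ z (Sum.inl j0)| := by
    simp only [dZ, Sum.elim_inl]
    rw [abs_of_nonneg (by linarith [hz j0])]
    exact hz j0
  linarith

lemma sum_indicator_eq (n k : ℕ) (hkn : k ≤ n) :
    (∑ j : Fin n, (if (j : ℕ) < k then (1 : ℝ) else 0)) = k := by
  rw [Fin.sum_univ_eq_sum_range (fun i => if i < k then (1:ℝ) else 0) n]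
  rw [Finset.range_eq_Ico, ← Finset.sum_Ico_consecutive _ (Nat.zero_le k) hkn]
  rw [Finset.sum_congr rfl (fun i hi => if_pos (Finset.mem_Ico.mp hi).2)]
  rw [Finset.sum_congr (M := ℝ) rfl (fun i hi => if_neg (by
    have := (Finset.mem_Ico.mp hi).1; omega))]
  simp

lemma frob_Pihat (hkn : k ≤ n) : frob (Pihat n k) = Real.sqrt (2 * k) := by
  rw [Pihat_eq, frob]
  congr 1
  have hdiag : ∀ p q : Fin n ⊕ Fin n,
      ‖Matrix.diagonal (dP n k) p q‖ ^ 2 = if q = p then (dP n k p) ^ 2 else 0 := by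
    intro p q
    by_cases h : q = p
    · subst h; simp [Matrix.diagonal_apply_eq, Real.norm_eq_abs, sq_abs]
    · rw [Matrix.diagonal_apply_ne' _ h, if_neg h]; simp
  calc (∑ p, ∑ q, ‖Matrix.diagonal (dP n k) p q‖ ^ 2)
      = ∑ p, (dP n k p) ^ 2 := by
        refine Finset.sum_congr rfl fun p _ => ?_
        rw [Finset.sum_congr rfl fun q _ => hdiag p q]
        simp
    _ = 2 * k := by
        have hsq : ∀ p, (dP n k p) ^ 2 = dP n k p := by
          rintro (j | j) <;> simp only [dP, Sum.elim_inl, Sum.elim_inr] <;> split <;> norm_num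
        rw [Finset.sum_congr rfl fun p _ => hsq p]
        rw [Fintype.sum_sum_type]
        simp only [dP, Sum.elim_inl, Sum.elim_inr]
        rw [sum_indicator_eq n k hkn]
        ring

end mainProof

section chains
open Matrix
variable {n k : ℕ} {z : Fin n → ℝ}

lemma frob_Pihat_mul_le (X : Matrix (Fin n ⊕ Fin n) (Fin n ⊕ Fin n) ℝ) :
    frob (Pihat n k * X) ≤ frob X := by
  have h := frob_diag_mul_le (d := dP n k) (c := 1) zero_le_one (dP_abs_le trivial) X
  rw [← Pihat_eq, one_mul] at h
  exact h

lemma frob_mul_Pihat_le (X : Matrix (Fin n ⊕ Fin n) (Fin n ⊕ Fin n) ℝ) :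
    frob (X * Pihat n k) ≤ frob X := by
  have h := frob_mul_diag_le (d := dP n k) (c := 1) zero_le_one (dP_abs_le trivial) X
  rw [← Pihat_eq, one_mul] at h
  exact h

lemma frob_Zhat_mul_le (hz : ∀ j, 1 ≤ z j) (X : Matrix (Fin n ⊕ Fin n) (Fin n ⊕ Fin n) ℝ) :
    frob (Zhat z * X) ≤ opNorm (Zhat z) * frob X := by
  have h := frob_diag_mul_le (d := dZ z) (c := opNorm (Zhat z)) (norm_nonneg _)
    (dZ_abs_le hz) X
  rw [← Zhat_eq] at h
  exact h

lemma frob_mul_Zhat_le (hz : ∀ j, 1 ≤ z j) (X : Matrix (Fin n ⊕ Fin n) (Fin n ⊕ Fin n) ℝ) :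
    frob (X * Zhat z) ≤ opNorm (Zhat z) * frob X := by
  have h := frob_mul_diag_le (d := dZ z) (c := opNorm (Zhat z)) (norm_nonneg _)
    (dZ_abs_le hz) X
  rw [← Zhat_eq] at h
  exact h

lemma frob_G_mul_le (hz : ∀ j, 1 ≤ z j) (U : Matrix.unitaryGroup (Fin n) ℂ)
    (Y : Matrix (Fin n ⊕ Fin n) (Fin n ⊕ Fin n) ℝ) :
    frob (Jmat n * Mnk k z U * Y) ≤ opNorm (Zhat z) * frob Y := by
  have e : Jmat n * Mnk k z U * Y
      = Jmat n * (Pihat n k * (eta U * (Zhat z * ((eta U)ᵀ * (Pihat n k * Y))))) := by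
    simp only [Mnk, Matrix.mul_assoc]
  rw [e, frob_orth_mul (Jmat_orth n)]
  calc frob (Pihat n k * (eta U * (Zhat z * ((eta U)ᵀ * (Pihat n k * Y)))))
      ≤ frob (eta U * (Zhat z * ((eta U)ᵀ * (Pihat n k * Y)))) := frob_Pihat_mul_le _
    _ = frob (Zhat z * ((eta U)ᵀ * (Pihat n k * Y))) := frob_orth_mul (eta_orth U) _
    _ ≤ opNorm (Zhat z) * frob ((eta U)ᵀ * (Pihat n k * Y)) := frob_Zhat_mul_le hz _
    _ = opNorm (Zhat z) * frob (Pihat n k * Y) := by rw [frob_orth_mul (etaT_orth U)]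
    _ ≤ opNorm (Zhat z) * frob Y :=
        mul_le_mul_of_nonneg_left (frob_Pihat_mul_le _) (norm_nonneg _)

lemma frob_mul_G_le (hz : ∀ j, 1 ≤ z j) (V : Matrix.unitaryGroup (Fin n) ℂ)
    (Y : Matrix (Fin n ⊕ Fin n) (Fin n ⊕ Fin n) ℝ) :
    frob (Y * (Jmat n * Mnk k z V)) ≤ opNorm (Zhat z) * frob Y := by
  have e : Y * (Jmat n * Mnk k z V)
      = Y * Jmat n * Pihat n k * eta V * Zhat z * (eta V)ᵀ * Pihat n k := by
    simp only [Mnk, Matrix.mul_assoc]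
  rw [e]
  calc frob (Y * Jmat n * Pihat n k * eta V * Zhat z * (eta V)ᵀ * Pihat n k)
      ≤ frob (Y * Jmat n * Pihat n k * eta V * Zhat z * (eta V)ᵀ) := frob_mul_Pihat_le _
    _ = frob (Y * Jmat n * Pihat n k * eta V * Zhat z) := frob_mul_orth (etaT_orth V) _
    _ ≤ opNorm (Zhat z) * frob (Y * Jmat n * Pihat n k * eta V) := frob_mul_Zhat_le hz _
    _ = opNorm (Zhat z) * frob (Y * Jmat n * Pihat n k) := by
        rw [frob_mul_orth (eta_orth V)]
    _ ≤ opNorm (Zhat z) * frob (Y * Jmat n) :=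
        mul_le_mul_of_nonneg_left (frob_mul_Pihat_le _) (norm_nonneg _)
    _ = opNorm (Zhat z) * frob Y := by rw [frob_mul_orth (Jmat_orth n)]

lemma frob_G_le (hz : ∀ j, 1 ≤ z j) (hkn : k ≤ n) (U : Matrix.unitaryGroup (Fin n) ℂ) :
    frob (Jmat n * Mnk k z U) ≤ Real.sqrt (2 * k) * opNorm (Zhat z) := by
  have e : Jmat n * Mnk k z U
      = Jmat n * (Pihat n k * (eta U * (Zhat z * ((eta U)ᵀ * Pihat n k)))) := by
    simp only [Mnk, Matrix.mul_assoc]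
  rw [e, frob_orth_mul (Jmat_orth n)]
  calc frob (Pihat n k * (eta U * (Zhat z * ((eta U)ᵀ * Pihat n k))))
      ≤ frob (eta U * (Zhat z * ((eta U)ᵀ * Pihat n k))) := frob_Pihat_mul_le _
    _ = frob (Zhat z * ((eta U)ᵀ * Pihat n k)) := frob_orth_mul (eta_orth U) _
    _ ≤ opNorm (Zhat z) * frob ((eta U)ᵀ * Pihat n k) := frob_Zhat_mul_le hz _
    _ = opNorm (Zhat z) * frob (Pihat n k) := by rw [frob_orth_mul (etaT_orth U)]
    _ = Real.sqrt (2 * k) * opNorm (Zhat z) := by rw [frob_Pihat hkn]; ring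

lemma eta_sub_frob {n : ℕ} (U V : Matrix.unitaryGroup (Fin n) ℂ) :
    frob (eta U - eta V)
      = Real.sqrt 2 * frob ((U : Matrix (Fin n) (Fin n) ℂ) - (V : Matrix (Fin n) (Fin n) ℂ)) := by
  rw [frob, frob, ← Real.sqrt_mul (by norm_num : (0:ℝ) ≤ 2)]
  congr 1
  simp only [Fintype.sum_sum_type, Matrix.sub_apply, eta,
    Matrix.fromBlocks_apply₁₁, Matrix.fromBlocks_apply₁₂, Matrix.fromBlocks_apply₂₁,
    Matrix.fromBlocks_apply₂₂, Matrix.of_apply, Real.norm_eq_abs, sq_abs,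
    Complex.sq_norm, Complex.normSq_apply, Complex.sub_re, Complex.sub_im]
  rw [Finset.mul_sum, ← Finset.sum_add_distrib]
  refine Finset.sum_congr rfl fun i _ => ?_
  rw [Finset.mul_sum, ← Finset.sum_add_distrib, ← Finset.sum_add_distrib,
    ← Finset.sum_add_distrib]
  refine Finset.sum_congr rfl fun j _ => ?_
  ring

lemma frob_Msub_le (hz : ∀ j, 1 ≤ z j) (U V : Matrix.unitaryGroup (Fin n) ℂ) :
    frob (Mnk k z U - Mnk k z V)
      ≤ 2 * Real.sqrt 2 * opNorm (Zhat z)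
          * frob ((U : Matrix (Fin n) (Fin n) ℂ) - (V : Matrix (Fin n) (Fin n) ℂ)) := by
  have hsplit : Mnk k z U - Mnk k z V
      = Pihat n k * ((eta U * (Zhat z * (eta U - eta V)ᵀ)
          + (eta U - eta V) * (Zhat z * (eta V)ᵀ)) * Pihat n k) := by
    simp only [Mnk, Matrix.transpose_sub, Matrix.mul_sub, Matrix.sub_mul,
      Matrix.add_mul, Matrix.mul_add, Matrix.mul_assoc]
    abel
  rw [hsplit]
  set c := frob ((U : Matrix (Fin n) (Fin n) ℂ) - (V : Matrix (Fin n) (Fin n) ℂ)) with hc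
  have hζ : 0 ≤ opNorm (Zhat z) := norm_nonneg _
  have h1 : frob (eta U * (Zhat z * (eta U - eta V)ᵀ)) ≤ opNorm (Zhat z) * (Real.sqrt 2 * c) := by
    rw [frob_orth_mul (eta_orth U)]
    calc frob (Zhat z * (eta U - eta V)ᵀ)
        ≤ opNorm (Zhat z) * frob ((eta U - eta V)ᵀ) := frob_Zhat_mul_le hz _
      _ = opNorm (Zhat z) * (Real.sqrt 2 * c) := by
          rw [frob_transpose, eta_sub_frob U V]
  have h2 : frob ((eta U - eta V) * (Zhat z * (eta V)ᵀ)) ≤ opNorm (Zhat z) * (Real.sqrt 2 * c) := by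
    have e : (eta U - eta V) * (Zhat z * (eta V)ᵀ) = (eta U - eta V) * Zhat z * (eta V)ᵀ := by
      rw [Matrix.mul_assoc]
    rw [e, frob_mul_orth (etaT_orth V)]
    calc frob ((eta U - eta V) * Zhat z)
        ≤ opNorm (Zhat z) * frob (eta U - eta V) := frob_mul_Zhat_le hz _
      _ = opNorm (Zhat z) * (Real.sqrt 2 * c) := by rw [eta_sub_frob U V]
  calc frob (Pihat n k * ((eta U * (Zhat z * (eta U - eta V)ᵀ)
          + (eta U - eta V) * (Zhat z * (eta V)ᵀ)) * Pihat n k))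
      ≤ frob ((eta U * (Zhat z * (eta U - eta V)ᵀ)
          + (eta U - eta V) * (Zhat z * (eta V)ᵀ)) * Pihat n k) := frob_Pihat_mul_le _
    _ ≤ frob (eta U * (Zhat z * (eta U - eta V)ᵀ)
          + (eta U - eta V) * (Zhat z * (eta V)ᵀ)) := frob_mul_Pihat_le _
    _ ≤ frob (eta U * (Zhat z * (eta U - eta V)ᵀ))
          + frob ((eta U - eta V) * (Zhat z * (eta V)ᵀ)) := frob_add_le _ _
    _ ≤ opNorm (Zhat z) * (Real.sqrt 2 * c) + opNorm (Zhat z) * (Real.sqrt 2 * c) := by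
        exact add_le_add h1 h2
    _ = 2 * Real.sqrt 2 * opNorm (Zhat z) * c := by ring

lemma trace_Zhat (z : Fin n → ℝ) :
    Matrix.trace (Zhat z) = ∑ j, (z j + (z j)⁻¹) := by
  rw [Zhat_eq, Matrix.trace_diagonal, Fintype.sum_sum_type]
  simp only [dZ, Sum.elim_inl, Sum.elim_inr]
  rw [← Finset.sum_add_distrib]

lemma lam_nonneg (hz : ∀ j, 1 ≤ z j) : 0 ≤ Matrix.trace (Zhat z) / (2 * n) := by
  rw [trace_Zhat]
  apply div_nonneg
  · apply Finset.sum_nonneg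
    intro j _
    have := hz j
    have : 0 < z j := by linarith
    positivity
  · positivity

lemma lam_le (hz : ∀ j, 1 ≤ z j) (hn : 1 ≤ n) :
    Matrix.trace (Zhat z) / (2 * n) ≤ opNorm (Zhat z) := by
  rw [trace_Zhat]
  have hζ1 : 1 ≤ opNorm (Zhat z) := opZ_pos hz hn
  have hterm : ∀ j : Fin n, z j + (z j)⁻¹ ≤ 2 * opNorm (Zhat z) := by
    intro j
    have h1 : z j ≤ opNorm (Zhat z) := by
      have := dZ_abs_le hz (Sum.inl j)
      simp only [dZ, Sum.elim_inl] at this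
      rw [abs_of_nonneg (by linarith [hz j])] at this
      exact this
    have h2 : (z j)⁻¹ ≤ 1 := by
      rw [inv_le_one_iff₀]
      right; exact hz j
    linarith
  have hsum : (∑ j, (z j + (z j)⁻¹)) ≤ n * (2 * opNorm (Zhat z)) := by
    calc (∑ j, (z j + (z j)⁻¹)) ≤ ∑ _j : Fin n, 2 * opNorm (Zhat z) :=
          Finset.sum_le_sum fun j _ => hterm j
      _ = n * (2 * opNorm (Zhat z)) := by
          rw [Finset.sum_const, Finset.card_univ, Fintype.card_fin, nsmul_eq_mul]
  have hnpos : (0:ℝ) < 2 * n := by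
    have : (1:ℝ) ≤ n := by exact_mod_cast hn
    linarith
  rw [div_le_iff₀ hnpos]
  calc (∑ j, (z j + (z j)⁻¹)) ≤ n * (2 * opNorm (Zhat z)) := hsum
    _ = opNorm (Zhat z) * (2 * n) := by ring

end chains

set_option maxHeartbeats 1000000 in
/-- **Lemma (Lipschitz bound for `f`)** (Statement 11): for
`f(U) = tr[((J M_{n,k}(U))² + λ² Π̂)²]` with `λ = tr(Ẑ)/(2n)`, one has
`|f(U) − f(V)| ≤ 32 √(2k) ‖Ẑ‖_∞⁴ ‖U − V‖₂` for all unitaries `U, V`. -/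
theorem f_lipschitz (n k : ℕ) (hn : 1 ≤ n) (hk1 : 1 ≤ k) (hkn : k ≤ n)
    (z : Fin n → ℝ) (hz : ∀ j, 1 ≤ z j)
    (U V : Matrix.unitaryGroup (Fin n) ℂ) :
    |Matrix.trace (((Jmat n * Mnk k z U) ^ 2
        + (Matrix.trace (Zhat z) / (2 * n)) ^ 2 • Pihat n k) ^ 2)
      - Matrix.trace (((Jmat n * Mnk k z V) ^ 2
        + (Matrix.trace (Zhat z) / (2 * n)) ^ 2 • Pihat n k) ^ 2)|
      ≤ 32 * Real.sqrt (2 * k) * (opNorm (Zhat z)) ^ 4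
          * frob ((U : Matrix (Fin n) (Fin n) ℂ) - (V : Matrix (Fin n) (Fin n) ℂ)) := by
  set ζ := opNorm (Zhat z) with hζdef
  set c := frob ((U : Matrix (Fin n) (Fin n) ℂ) - (V : Matrix (Fin n) (Fin n) ℂ)) with hcdef
  set lam := Matrix.trace (Zhat z) / (2 * (n:ℝ)) with hlamdef
  set GU := Jmat n * Mnk k z U with hGU
  set GV := Jmat n * Mnk k z V with hGV
  set XU := GU ^ 2 + lam ^ 2 • Pihat n k with hXU
  set XV := GV ^ 2 + lam ^ 2 • Pihat n k with hXV
  have hζ0 : (0:ℝ) ≤ ζ := norm_nonneg _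
  have hζ1 : (1:ℝ) ≤ ζ := opZ_pos hz hn
  have hc0 : (0:ℝ) ≤ c := frob_nonneg _
  have hs0 : (0:ℝ) ≤ Real.sqrt (2 * k) := Real.sqrt_nonneg _
  have hlam0 : (0:ℝ) ≤ lam := lam_nonneg hz
  have hlamζ : lam ≤ ζ := lam_le hz hn
  -- trace algebra
  have htrace : Matrix.trace (XU ^ 2) - Matrix.trace (XV ^ 2)
      = Matrix.trace ((XU - XV) * XU) + Matrix.trace (XV * (XU - XV)) := by
    rw [sq, sq, ← Matrix.trace_sub,
      show XU * XU - XV * XV = (XU - XV) * XU + XV * (XU - XV) by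
        rw [Matrix.sub_mul, Matrix.mul_sub]; abel,
      Matrix.trace_add]
  have habs : |Matrix.trace (XU ^ 2) - Matrix.trace (XV ^ 2)|
      ≤ frob (XU - XV) * frob XU + frob XV * frob (XU - XV) := by
    rw [htrace]
    exact (abs_add_le _ _).trans
      (add_le_add (abs_trace_mul_le _ _) (abs_trace_mul_le _ _))
  have hGsub : frob (GU - GV) ≤ 2 * Real.sqrt 2 * ζ * c := by
    have e : GU - GV = Jmat n * (Mnk k z U - Mnk k z V) := by
      rw [hGU, hGV, Matrix.mul_sub]
    rw [e, frob_orth_mul (Jmat_orth n)]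
    exact frob_Msub_le hz U V
  have hXsub : XU - XV = GU * (GU - GV) + (GU - GV) * GV := by
    have e1 : XU - XV = GU ^ 2 - GV ^ 2 := by rw [hXU, hXV]; abel
    rw [e1, sq, sq, Matrix.mul_sub, Matrix.sub_mul]; abel
  have hDb : frob (XU - XV) ≤ 4 * Real.sqrt 2 * ζ ^ 2 * c := by
    rw [hXsub]
    calc frob (GU * (GU - GV) + (GU - GV) * GV)
        ≤ frob (GU * (GU - GV)) + frob ((GU - GV) * GV) := frob_add_le _ _
      _ ≤ ζ * frob (GU - GV) + ζ * frob (GU - GV) :=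
          add_le_add (frob_G_mul_le hz U _) (frob_mul_G_le hz V _)
      _ ≤ ζ * (2 * Real.sqrt 2 * ζ * c) + ζ * (2 * Real.sqrt 2 * ζ * c) :=
          add_le_add (mul_le_mul_of_nonneg_left hGsub hζ0)
            (mul_le_mul_of_nonneg_left hGsub hζ0)
      _ = 4 * Real.sqrt 2 * ζ ^ 2 * c := by ring
  have hGUb : frob GU ≤ Real.sqrt (2 * k) * ζ := frob_G_le hz hkn U
  have hGVb : frob GV ≤ Real.sqrt (2 * k) * ζ := frob_G_le hz hkn V
  have hXb : ∀ (G : Matrix (Fin n ⊕ Fin n) (Fin n ⊕ Fin n) ℝ)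
      (hGmul : frob (G * G) ≤ ζ * frob G) (hGb : frob G ≤ Real.sqrt (2 * k) * ζ),
      frob (G ^ 2 + lam ^ 2 • Pihat n k) ≤ 2 * Real.sqrt (2 * k) * ζ ^ 2 := by
    intro G hGmul hGb
    calc frob (G ^ 2 + lam ^ 2 • Pihat n k)
        ≤ frob (G ^ 2) + frob (lam ^ 2 • Pihat n k) := frob_add_le _ _
      _ = frob (G * G) + lam ^ 2 * Real.sqrt (2 * k) := by
          rw [sq, frob_smul, frob_Pihat hkn, abs_of_nonneg (by positivity)]
      _ ≤ ζ * frob G + ζ ^ 2 * Real.sqrt (2 * k) := by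
          refine add_le_add hGmul (mul_le_mul_of_nonneg_right ?_ hs0)
          exact pow_le_pow_left₀ hlam0 hlamζ 2
      _ ≤ ζ * (Real.sqrt (2 * k) * ζ) + ζ ^ 2 * Real.sqrt (2 * k) :=
          add_le_add (mul_le_mul_of_nonneg_left hGb hζ0) le_rfl
      _ = 2 * Real.sqrt (2 * k) * ζ ^ 2 := by ring
  have hXUb : frob XU ≤ 2 * Real.sqrt (2 * k) * ζ ^ 2 :=
    hXb GU (by simpa [sq] using frob_G_mul_le hz U GU) hGUb
  have hXVb : frob XV ≤ 2 * Real.sqrt (2 * k) * ζ ^ 2 :=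
    hXb GV (by simpa [sq] using frob_G_mul_le hz V GV) hGVb
  have hsqrt2 : Real.sqrt 2 ≤ 2 := by
    nlinarith [Real.sq_sqrt (by norm_num : (0:ℝ) ≤ 2), Real.sqrt_nonneg 2]
  have hD0 : 0 ≤ frob (XU - XV) := frob_nonneg _
  have hXU0 : 0 ≤ frob XU := frob_nonneg _
  have hXV0 : 0 ≤ frob XV := frob_nonneg _
  calc |Matrix.trace (XU ^ 2) - Matrix.trace (XV ^ 2)|
      ≤ frob (XU - XV) * frob XU + frob XV * frob (XU - XV) := habs
    _ ≤ (4 * Real.sqrt 2 * ζ ^ 2 * c) * (2 * Real.sqrt (2 * k) * ζ ^ 2)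
        + (2 * Real.sqrt (2 * k) * ζ ^ 2) * (4 * Real.sqrt 2 * ζ ^ 2 * c) := by
        refine add_le_add (mul_le_mul hDb hXUb hXU0 (by positivity))
          (mul_le_mul hXVb hDb hD0 (by positivity))
    _ = 16 * Real.sqrt 2 * Real.sqrt (2 * k) * ζ ^ 4 * c := by ring
    _ ≤ 32 * Real.sqrt (2 * k) * ζ ^ 4 * c := by
        have hζ4 : (0:ℝ) ≤ ζ ^ 4 := by positivity
        nlinarith [mul_nonneg (mul_nonneg hs0 hζ4) hc0, Real.sqrt_nonneg 2]
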